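/- (Carlitz inversion, Fibonacci form) For all n ≥ 0, ∑_{k=0}^{⌊n/2⌋} (qbinom(n,k) - qbinom(n,k-1)) · (-s)^k · F_{n+1-2k}(x,s,q) = x^n, where qbinom(n,-1) = 0. -/

import Mathlib

open Finset

noncomputable section

abbrev K : Type := RatFunc ℚ

def q : K := RatFunc.X

def qint (a : K) (m : ℕ) : K := ∑ i ∈ range m, a ^ i

def qfact (a : K) (m : ℕ) : K := ∏ i ∈ range m, qint a (i + 1)

def qbinom (a : K) (n k : ℕ) : K :=
  if k ≤ n then qfact a n / (qfact a k * qfact a (n - k)) else 0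

/-- q-Fibonacci polynomials F_n(x,s,q) with base `a`. -/
def qF (a x s : K) : ℕ → K
  | 0 => 0
  | n + 1 => ∑ k ∈ range (n / 2 + 1),
      a ^ (k * (k + 1) / 2) * qbinom a (n - k) k * s ^ k * x ^ (n - 2 * k)

/-- q-Lucas polynomials L_n(x,s,q) with base `a` (L_0 = 2). -/
def qL (a x s : K) (n : ℕ) : K :=
  if n = 0 then 2 else
  ∑ k ∈ range (n / 2 + 1),
    a ^ (k * (k - 1) / 2) * (qint a n / qint a (n - k)) * qbinom a (n - k) k
      * s ^ k * x ^ (n - 2 * k)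

/-- Starred variant: L*_0 = 1, L*_n = L_n for n > 0. -/
def qLs (a x s : K) (n : ℕ) : K := if n = 0 then 1 else qL a x s n

/-- Rogers-Szegő polynomial. -/
def rs (a x y : K) (m : ℕ) : K := ∑ j ∈ range (m + 1), qbinom a m j * x ^ j * y ^ (m - j)

/-- q-Pochhammer (q;q)_m. -/
def qpoch (a : K) (m : ℕ) : K := ∏ j ∈ range m, (1 - a ^ (j + 1))

/-!
Expanding each `F_{n+1-2k}` and collecting powers of `s`, the coefficient of `s^m x^{n-2m}` is a
sum over `k ≤ m` of q-hypergeometric terms. For `m = 0` it is `1`. For `m ≥ 1` the term has a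
q-hypergeometric antidifference in `k` (a Gosper certificate), so the sum telescopes to zero.
Checking the certificate only uses the ratios of neighbouring Gaussian binomials, which are
available for any base that is not a root of unity.
-/

section QAnalogues

variable {a : K}

lemma one_sub_pow_ne_zero_of_not_isOfFinOrder (ha : ¬IsOfFinOrder a) {j : ℕ} (hj : j ≠ 0) :
    1 - a ^ j ≠ 0 :=
  fun h => ha <| isOfFinOrder_iff_pow_eq_one.mpr
    ⟨j, Nat.pos_of_ne_zero hj, (sub_eq_zero.mp h).symm⟩

lemma qint_mul_one_sub (a : K) (j : ℕ) : qint a j * (1 - a) = 1 - a ^ j := by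
  unfold qint
  linear_combination -geom_sum_mul a j

lemma qint_ne_zero (ha : ¬IsOfFinOrder a) {j : ℕ} (hj : j ≠ 0) : qint a j ≠ 0 :=
  left_ne_zero_of_mul <|
    (qint_mul_one_sub a j).symm ▸ one_sub_pow_ne_zero_of_not_isOfFinOrder ha hj

lemma qfact_ne_zero (ha : ¬IsOfFinOrder a) (m : ℕ) : qfact a m ≠ 0 :=
  prod_ne_zero_iff.mpr fun i _ => qint_ne_zero ha i.succ_ne_zero

lemma qfact_zero (a : K) : qfact a 0 = 1 :=
  prod_range_zero _

lemma qfact_succ (a : K) (m : ℕ) : qfact a (m + 1) = qfact a m * qint a (m + 1) :=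
  prod_range_succ _ _

lemma qbinom_zero_right (ha : ¬IsOfFinOrder a) (n : ℕ) : qbinom a n 0 = 1 := by
  simp [qbinom, qfact_zero, qfact_ne_zero ha]

lemma qbinom_succ_right_mul (ha : ¬IsOfFinOrder a) {n k : ℕ} (h : k < n) :
    qbinom a n (k + 1) * (1 - a ^ (k + 1)) = qbinom a n k * (1 - a ^ (n - k)) := by
  obtain ⟨d, rfl⟩ : ∃ d, n = k + 1 + d := ⟨n - k - 1, by omega⟩
  rw [qbinom, qbinom, if_pos (show k + 1 ≤ k + 1 + d by omega),
    if_pos (show k ≤ k + 1 + d by omega), show k + 1 + d - k = d + 1 by omega,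
    Nat.add_sub_cancel_left, qfact_succ a k, qfact_succ a d, ← qint_mul_one_sub,
    ← qint_mul_one_sub]
  have := qint_ne_zero ha (Nat.succ_ne_zero k)
  have := qint_ne_zero ha (Nat.succ_ne_zero d)
  field_simp [qfact_ne_zero ha]

lemma qbinom_succ_succ_mul (ha : ¬IsOfFinOrder a) (n k : ℕ) :
    qbinom a (n + 1) (k + 1) * (1 - a ^ (k + 1)) = qbinom a n k * (1 - a ^ (n + 1)) := by
  rcases lt_or_ge n k with h | h
  · simp [qbinom, not_le.mpr h]
  rw [qbinom, qbinom, if_pos (by omega), if_pos h, Nat.add_sub_add_right, qfact_succ a n,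
    qfact_succ a k, ← qint_mul_one_sub, ← qint_mul_one_sub]
  have := qint_ne_zero ha (Nat.succ_ne_zero k)
  field_simp [qfact_ne_zero ha]

end QAnalogues

def carlitzCoeff (a : K) (n k : ℕ) : K :=
  qbinom a n k - if k = 0 then 0 else qbinom a n (k - 1)

def fibCoeff (a : K) (n j : ℕ) : K :=
  a ^ (j * (j + 1) / 2) * qbinom a (n - j) j

lemma qF_succ (a x s : K) (n : ℕ) :
    qF a x s (n + 1) = ∑ j ∈ range (n / 2 + 1), fibCoeff a n j * s ^ j * x ^ (n - 2 * j) :=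
  rfl

section Telescoping

variable {a : K}

lemma carlitzCoeff_mul (ha : ¬IsOfFinOrder a) {n k : ℕ} (h : k ≤ n) :
    carlitzCoeff a n k * (1 - a ^ (n - k + 1)) = qbinom a n k * (a ^ k - a ^ (n - k + 1)) := by
  rcases k with _ | k
  · simp [carlitzCoeff]
  have := qbinom_succ_right_mul ha (show k < n by omega)
  rw [show n - (k + 1) + 1 = n - k by omega]
  simp only [carlitzCoeff, Nat.add_sub_cancel, if_neg (Nat.succ_ne_zero k)]
  linear_combination this

lemma fibCoeff_add_two_succ_mul (ha : ¬IsOfFinOrder a) {n j : ℕ} (h : j ≤ n) :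
    fibCoeff a (n + 2) (j + 1) * (1 - a ^ (j + 1)) =
      a ^ (j + 1) * (1 - a ^ (n - j + 1)) * fibCoeff a n j := by
  have htri : (j + 1) * (j + 1 + 1) / 2 = j * (j + 1) / 2 + (j + 1) := by
    rw [show (j + 1) * (j + 1 + 1) = j * (j + 1) + 2 * (j + 1) by ring,
      Nat.add_mul_div_left _ _ two_pos]
  rw [fibCoeff, fibCoeff, htri, show n + 2 - (j + 1) = n - j + 1 by omega, pow_add,
    mul_assoc, qbinom_succ_succ_mul ha]
  ring

/-- Summed over `k ≤ m`, this is the coefficient of `s ^ m * x ^ (n - 2 * m)` in the left-hand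
side of the inversion formula. -/
def carlitzTerm (a : K) (n m k : ℕ) : K :=
  carlitzCoeff a n k * (-1) ^ k * fibCoeff a (n - 2 * k) (m - k)

/-- Found by the q-analogue of Gosper's algorithm: the antidifference of `carlitzTerm a n m`
in `k`. -/
def carlitzCertificate (a : K) (n m k : ℕ) : K :=
  (-1) ^ (k + 1) * a ^ m * (1 - a ^ k) * (1 - a ^ (n - m - k + 1)) * qbinom a n k
    * fibCoeff a (n - 2 * k) (m - k) / ((1 - a ^ m) * (1 - a ^ (n - k + 1)))

lemma carlitzCertificate_zero (a : K) (n m : ℕ) : carlitzCertificate a n m 0 = 0 := by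
  simp [carlitzCertificate]

lemma carlitzCertificate_succ_sub (ha : ¬IsOfFinOrder a) {n m k : ℕ} (hk : k < m)
    (hm : 2 * m ≤ n) :
    carlitzCertificate a n m (k + 1) - carlitzCertificate a n m k = carlitzTerm a n m k := by
  obtain ⟨u, rfl⟩ : ∃ u, m = k + 1 + u := ⟨m - k - 1, by omega⟩
  obtain ⟨w, rfl⟩ : ∃ w, n = 2 * k + 2 + 2 * u + w := ⟨n - 2 * k - 2 - 2 * u, by omega⟩
  set n := 2 * k + 2 + 2 * u + w
  have hbinom :
      qbinom a n (k + 1) * (1 - a ^ (k + 1)) = qbinom a n k * (1 - a ^ (k + 2 * u + w + 2)) := by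
    rw [qbinom_succ_right_mul ha (by omega), show n - k = k + 2 * u + w + 2 by omega]
  have hfib := fibCoeff_add_two_succ_mul ha (show u ≤ 2 * u + w by omega)
  have hcoeff := carlitzCoeff_mul ha (show k ≤ n by omega)
  rw [show n - k + 1 = k + 2 * u + w + 3 by omega] at hcoeff
  rw [show 2 * u + w - u + 1 = u + w + 1 by omega] at hfib
  simp only [carlitzCertificate, carlitzTerm]
  rw [show n - 2 * (k + 1) = 2 * u + w by omega, show n - 2 * k = 2 * u + w + 2 by omega,
    show k + 1 + u - (k + 1) = u by omega, show k + 1 + u - k = u + 1 by omega,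
    show n - (k + 1 + u) - (k + 1) + 1 = u + w + 1 by omega,
    show n - (k + 1 + u) - k + 1 = u + w + 2 by omega,
    show n - (k + 1) + 1 = k + 2 * u + w + 2 by omega, show n - k + 1 = k + 2 * u + w + 3 by omega]
  have hne {j : ℕ} (hj : j ≠ 0) := one_sub_pow_ne_zero_of_not_isOfFinOrder ha hj
  have h₁ := hne (show k + 1 ≠ 0 by omega)
  have h₂ := hne (show u + 1 ≠ 0 by omega)
  have h₃ := hne (show k + 2 * u + w + 3 ≠ 0 by omega)
  have := hne (show k + 1 + u ≠ 0 by omega)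
  have := hne (show k + 2 * u + w + 2 ≠ 0 by omega)
  rw [eq_div_of_mul_eq h₁ hbinom, eq_div_of_mul_eq h₃ hcoeff, eq_div_of_mul_eq h₂ hfib]
  field_simp
  ring

lemma carlitzCertificate_self (ha : ¬IsOfFinOrder a) {n m : ℕ} (hm : m ≠ 0) (h : 2 * m ≤ n) :
    carlitzCertificate a n m m = -carlitzTerm a n m m := by
  obtain ⟨w, rfl⟩ : ∃ w, 2 * m + w = n := ⟨n - 2 * m, by omega⟩
  have hcoeff := carlitzCoeff_mul ha (show m ≤ 2 * m + w by omega)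
  rw [show 2 * m + w - m + 1 = m + w + 1 by omega] at hcoeff
  simp only [carlitzCertificate, carlitzTerm, fibCoeff, Nat.sub_self, qbinom_zero_right ha]
  rw [show 2 * m + w - m - m + 1 = w + 1 by omega, show 2 * m + w - m + 1 = m + w + 1 by omega,
    eq_div_of_mul_eq (one_sub_pow_ne_zero_of_not_isOfFinOrder ha (by omega)) hcoeff]
  have := one_sub_pow_ne_zero_of_not_isOfFinOrder ha hm
  field_simp
  ring

lemma sum_carlitzTerm_eq_zero (ha : ¬IsOfFinOrder a) {n m : ℕ} (hm : m ≠ 0) (h : 2 * m ≤ n) :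
    ∑ k ∈ range (m + 1), carlitzTerm a n m k = 0 := by
  rw [sum_range_succ, ← sum_congr rfl fun k hk =>
      carlitzCertificate_succ_sub ha (mem_range.mp hk) h,
    sum_range_sub, carlitzCertificate_zero, carlitzCertificate_self ha hm h]
  ring

end Telescoping

theorem carlitz_inversion {a : K} (ha : ¬IsOfFinOrder a) (x s : K) (n : ℕ) :
    ∑ k ∈ range (n / 2 + 1), carlitzCoeff a n k * (-s) ^ k * qF a x s (n + 1 - 2 * k) =
      x ^ n := by
  calc _ = ∑ k ∈ range (n / 2 + 1), ∑ j ∈ range (n / 2 + 1 - k),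
          carlitzCoeff a n k * (-s) ^ k
            * (fibCoeff a (n - 2 * k) j * s ^ j * x ^ (n - 2 * k - 2 * j)) := by
        refine sum_congr rfl fun k hk => ?_
        rw [mem_range] at hk
        rw [show n + 1 - 2 * k = n - 2 * k + 1 by omega, qF_succ, mul_sum,
          show (n - 2 * k) / 2 + 1 = n / 2 + 1 - k by omega]
    _ = ∑ m ∈ range (n / 2 + 1), ∑ k ∈ range (m + 1), carlitzCoeff a n k * (-s) ^ k
          * (fibCoeff a (n - 2 * k) (m - k) * s ^ (m - k) * x ^ (n - 2 * k - 2 * (m - k))) :=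
        (sum_range_diag_flip _ fun k j => carlitzCoeff a n k * (-s) ^ k
          * (fibCoeff a (n - 2 * k) j * s ^ j * x ^ (n - 2 * k - 2 * j))).symm
    _ = ∑ m ∈ range (n / 2 + 1),
          (∑ k ∈ range (m + 1), carlitzTerm a n m k) * (s ^ m * x ^ (n - 2 * m)) := by
        refine sum_congr rfl fun m hm => ?_
        rw [sum_mul]
        refine sum_congr rfl fun k hk => ?_
        rw [mem_range] at hm hk
        rw [carlitzTerm, show n - 2 * k - 2 * (m - k) = n - 2 * m by omega, neg_pow,
          ← pow_mul_pow_sub s (show k ≤ m by omega)]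
        ring
    _ = x ^ n := by
        rw [sum_eq_single_of_mem 0 (by simp) fun m hm hm0 => by
          rw [sum_carlitzTerm_eq_zero ha hm0 (by rw [mem_range] at hm; omega), zero_mul]]
        simp [carlitzTerm, carlitzCoeff, fibCoeff, qbinom_zero_right ha]

lemma not_isOfFinOrder_q : ¬IsOfFinOrder q := by
  rw [isOfFinOrder_iff_pow_eq_one]
  rintro ⟨j, hj, h⟩
  have hX : (Polynomial.X : Polynomial ℚ) ^ j = 1 :=
    RatFunc.algebraMap_injective ℚ (by simpa [q, RatFunc.algebraMap_X] using h)
  simpa [hj.ne'] using congrArg Polynomial.natDegree hX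

theorem stmt8 (x s : K) (n : ℕ) :
    ∑ k ∈ range (n / 2 + 1),
      (qbinom q n k - if k = 0 then 0 else qbinom q n (k - 1)) * (-s) ^ k
        * qF q x s (n + 1 - 2 * k) = x ^ n :=
  carlitz_inversion not_isOfFinOrder_q x s n
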